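/- Every positive integer m can be written as a sum of Lagonacci numbers with distinct indices (completeness of the Lagonacci numeration system). -/

import Mathlib

/-! A sequence that starts at most at `1` and never more than doubles is complete: by induction on
`n`, every `m < f n` is a sum of distinct `f j` with `j < n`, since either `m < f (n - 1)` already
or `m - f (n - 1) < f n - f (n - 1) ≤ f (n - 1)`. The Lagonacci numbers are increasing, so
`Z (n + 1) = Z (n - 1) + Z (n - 2) ≤ 2 Z n`, and they are unbounded. -/

/-- The Lagonacci sequence: `Z 0 = 1, Z 1 = 2, Z 2 = 3`, `Z (n+3) = Z (n+1) + Z n`. -/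
def Z : ℕ → ℕ
  | 0 => 1
  | 1 => 2
  | 2 => 3
  | n + 3 => Z (n + 1) + Z n

theorem Z_pos : ∀ n, 0 < Z n
  | 0 => by simp [Z]
  | 1 => by simp [Z]
  | 2 => by simp [Z]
  | n + 3 => by
      have := Z_pos n
      simp [Z]; omega

/-- The index of the largest Lagonacci number not exceeding `m`. -/
def greedyIndex (m : ℕ) : ℕ := Nat.findGreatest (fun j => Z j ≤ m) m

theorem greedy_le {m : ℕ} (hm : 1 ≤ m) : Z (greedyIndex m) ≤ m :=
  Nat.findGreatest_spec (P := fun j => Z j ≤ m) (Nat.zero_le m) (by simpa [Z] using hm)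

/-- The list of indices produced by the greedy algorithm on `m`. -/
def greedyList : ℕ → List ℕ
  | 0 => []
  | m + 1 => greedyIndex (m + 1) :: greedyList (m + 1 - Z (greedyIndex (m + 1)))
decreasing_by
  have h1 := Z_pos (greedyIndex (m + 1))
  omega

/-- The number of summands in the greedy Lagonacci decomposition of `m`. -/
def k (m : ℕ) : ℕ := (greedyList m).length

open Finset

theorem exists_subset_range_sum_eq_of_lt {f : ℕ → ℕ} (h0 : f 0 ≤ 1)
    (hf : ∀ n, f (n + 1) ≤ 2 * f n) : ∀ n, ∀ m < f n, ∃ S ⊆ range n, ∑ j ∈ S, f j = m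
  | 0, m, hm => ⟨∅, empty_subset _, by simp only [sum_empty]; omega⟩
  | n + 1, m, hm => by
    by_cases hmn : m < f n
    · obtain ⟨S, hS, hsum⟩ := exists_subset_range_sum_eq_of_lt h0 hf n m hmn
      exact ⟨S, hS.trans (range_subset_range.2 n.le_succ), hsum⟩
    · have hrest : m - f n < f n := by have := hf n; omega
      obtain ⟨S, hS, hsum⟩ := exists_subset_range_sum_eq_of_lt h0 hf n (m - f n) hrest
      have hnS : n ∉ S := fun h => by simpa using hS h
      refine ⟨insert n S, ?_, ?_⟩
      · rw [range_add_one]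
        exact insert_subset_insert n hS
      · rw [sum_insert hnS, hsum]
        omega

theorem exists_sum_eq_of_succ_le_two_mul {f : ℕ → ℕ} (h0 : f 0 ≤ 1)
    (hf : ∀ n, f (n + 1) ≤ 2 * f n) (hunb : ∀ m, ∃ n, m < f n) (m : ℕ) :
    ∃ S : Finset ℕ, ∑ j ∈ S, f j = m := by
  obtain ⟨n, hn⟩ := hunb m
  obtain ⟨S, -, hsum⟩ := exists_subset_range_sum_eq_of_lt h0 hf n m hn
  exact ⟨S, hsum⟩

theorem Z_le_succ : ∀ n, Z n ≤ Z (n + 1)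
  | 0 | 1 | 2 => by simp [Z]
  | n + 3 => by
    have := Z_le_succ n
    have : Z (n + 1) ≤ Z (n + 2) := Z_le_succ (n + 1)
    show Z (n + 1) + Z n ≤ Z (n + 2) + Z (n + 1)
    omega

theorem Z_succ_le_two_mul : ∀ n, Z (n + 1) ≤ 2 * Z n
  | 0 | 1 => by simp [Z]
  | n + 2 => by
    have := Z_le_succ n
    have : Z (n + 1) ≤ Z (n + 2) := Z_le_succ (n + 1)
    show Z (n + 1) + Z n ≤ 2 * Z (n + 2)
    omega

theorem Z_lt_add_two : ∀ n, Z n < Z (n + 2)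
  | 0 => by simp [Z]
  | n + 1 => by
    have := Z_pos n
    show Z (n + 1) < Z (n + 1) + Z n
    omega

theorem lt_Z_two_mul_add_two (m : ℕ) : m < Z (2 * m + 2) :=
  ((strictMono_nat_of_lt_succ fun n => Z_lt_add_two (2 * n)).id_le m).trans_lt (Z_lt_add_two _)

theorem lagonacci_complete_general (m : ℕ) :
    ∃ S : Finset ℕ, m = ∑ j ∈ S, Z j := by
  obtain ⟨S, hsum⟩ := exists_sum_eq_of_succ_le_two_mul (by simp [Z]) Z_succ_le_two_mul
    (fun m => ⟨_, lt_Z_two_mul_add_two m⟩) m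
  exact ⟨S, hsum.symm⟩

/-- Completeness: every positive integer is a sum of Lagonacci numbers with
distinct indices. -/
theorem lagonacci_complete (m : ℕ) (hm : 1 ≤ m) :
    ∃ S : Finset ℕ, m = ∑ j ∈ S, Z j :=
  lagonacci_complete_general m
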